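/- arXiv:2311.05592 — 3 statements merged into one kernel-verified Lean document; each statement's English description precedes it below -/
import Mathlib

section
/- Let Q be a real symmetric n×n matrix, f(x) = f(0) + ∑_{j,k} Q_{jk} x_j x_k for x ∈ {0,1}^n, and q_j = ∑_k Q_{jk}. Then f(x) = f(0) + ∑_{j=0}^{n-1} q_j x_j - ∑_{0 ≤ j < k ≤ n-1} Q_{jk} (x_j ⊕ x_k), where x_j ⊕ x_k denotes XOR viewed as an element of {0,1} ⊂ ℝ. -/
/-- Rewriting a QUBO objective using XOR terms. -/
theorem qubo_rewrite (n : ℕ) (Q : Matrix (Fin n) (Fin n) ℝ) (hQ : Q.IsSymm)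
    (c : ℝ) (x : Fin n → Fin 2) :
    c + ∑ j, ∑ k, Q j k * ((x j : ℕ) : ℝ) * ((x k : ℕ) : ℝ)
      = c + ∑ j, (∑ k, Q j k) * ((x j : ℕ) : ℝ)
        - ∑ j, ∑ k ∈ Finset.Ioi j, Q j k * (((x j + x k : Fin 2) : ℕ) : ℝ) := by
  have hsym : ∀ j k, Q k j = Q j k := fun j k => by
    conv_lhs => rw [← hQ]
    rfl
  set X : Fin n → ℝ := fun j => ((x j : ℕ) : ℝ) with hX
  have hxor : ∀ j k, (((x j + x k : Fin 2) : ℕ) : ℝ) = X j + X k - 2 * X j * X k := by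
    intro j k
    simp only [hX]
    generalize x j = a
    generalize x k = b
    fin_cases a <;> fin_cases b <;> simp [Fin.add_def] <;> norm_num
  have hsq : ∀ j, X j * X j = X j := by
    intro j
    simp only [hX]
    generalize x j = a
    fin_cases a <;> norm_num
  have hswap : ∀ f : Fin n → Fin n → ℝ,
      ∑ j, ∑ k ∈ Finset.Iio j, f j k = ∑ j, ∑ k ∈ Finset.Ioi j, f k j := by
    intro f
    exact Finset.sum_comm' (fun a b => by
      simp only [Finset.mem_univ, Finset.mem_Iio, Finset.mem_Ioi, true_and, and_true])
  have hsplit : ∀ f : Fin n → Fin n → ℝ,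
      (∑ j, ∑ k, f j k)
        = (∑ j, f j j) + ((∑ j, ∑ k ∈ Finset.Iio j, f j k)
          + (∑ j, ∑ k ∈ Finset.Ioi j, f j k)) := by
    intro f
    rw [← Finset.sum_add_distrib, ← Finset.sum_add_distrib]
    refine Finset.sum_congr rfl fun j _ => ?_
    have huniv : (Finset.univ : Finset (Fin n))
        = insert j (Finset.Iio j ∪ Finset.Ioi j) := by
      ext k
      simp only [Finset.mem_univ, Finset.mem_insert, Finset.mem_union,
        Finset.mem_Iio, Finset.mem_Ioi, true_iff]
      rcases lt_trichotomy k j with h | h | h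
      · exact Or.inr (Or.inl h)
      · exact Or.inl h
      · exact Or.inr (Or.inr h)
    rw [huniv, Finset.sum_insert (by simp), Finset.sum_union (by
      simp only [Finset.disjoint_left, Finset.mem_Iio, Finset.mem_Ioi]
      exact fun a h1 h2 => absurd (h1.trans h2) (lt_irrefl a))]
  -- Expand everything
  have e1 : (∑ j, ∑ k, Q j k * X j * X k)
      = (∑ j, Q j j * X j)
        + ((∑ j, ∑ k ∈ Finset.Ioi j, Q j k * (X j * X k))
          + (∑ j, ∑ k ∈ Finset.Ioi j, Q j k * (X j * X k))) := by
    rw [hsplit fun j k => Q j k * X j * X k, hswap fun j k => Q j k * X j * X k]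
    congr 1
    · exact Finset.sum_congr rfl fun j _ => by rw [mul_assoc, hsq]
    congr 1
    · refine Finset.sum_congr rfl fun j _ => Finset.sum_congr rfl fun k _ => ?_
      rw [hsym j k]; ring
    · exact Finset.sum_congr rfl fun j _ => Finset.sum_congr rfl fun k _ => by ring
  have e2 : (∑ j, (∑ k, Q j k) * X j)
      = (∑ j, Q j j * X j)
        + ((∑ j, ∑ k ∈ Finset.Ioi j, Q j k * X k)
          + (∑ j, ∑ k ∈ Finset.Ioi j, Q j k * X j)) := by
    have : (∑ j, (∑ k, Q j k) * X j) = ∑ j, ∑ k, Q j k * X j := by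
      refine Finset.sum_congr rfl fun j _ => ?_
      rw [Finset.sum_mul]
    rw [this, hsplit fun j k => Q j k * X j, hswap fun j k => Q j k * X j]
    congr 1
    congr 1
    refine Finset.sum_congr rfl fun j _ => Finset.sum_congr rfl fun k _ => ?_
    rw [hsym j k]
  have e3 : (∑ j, ∑ k ∈ Finset.Ioi j, Q j k * (((x j + x k : Fin 2) : ℕ) : ℝ))
      = (∑ j, ∑ k ∈ Finset.Ioi j, Q j k * X j)
        + (∑ j, ∑ k ∈ Finset.Ioi j, Q j k * X k)
        - 2 * (∑ j, ∑ k ∈ Finset.Ioi j, Q j k * (X j * X k)) := by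
    rw [Finset.mul_sum, ← Finset.sum_add_distrib, ← Finset.sum_sub_distrib]
    refine Finset.sum_congr rfl fun j _ => ?_
    rw [Finset.mul_sum, ← Finset.sum_add_distrib, ← Finset.sum_sub_distrib]
    refine Finset.sum_congr rfl fun k _ => ?_
    rw [hxor j k]; ring
  rw [e1, e2, e3]
  ring
end

section
/- For t ∈ (0,1), sin²(πt)·(1/(πt)² + 1/(π(1-t))²) ≥ 8/π². -/
lemma polyA (t : ℝ) (h0 : 0 < t) (hc : t ≤ 2/9) :
    (9.8696:ℝ) * (1 - 9.8697*t^2/4)^2 * ((1-t)^2 + t^2) ≥ 8 * (1-t)^2 := by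
  nlinarith [sq_nonneg t, sq_nonneg (t*t), mul_nonneg (mul_nonneg h0.le h0.le) (sub_nonneg.2 hc),
    mul_nonneg (mul_nonneg (mul_nonneg h0.le h0.le) h0.le) h0.le,
    mul_nonneg (mul_nonneg (mul_nonneg (mul_nonneg h0.le h0.le) h0.le) h0.le) h0.le,
    mul_nonneg (mul_nonneg (mul_nonneg h0.le h0.le) h0.le) (sub_nonneg.2 hc),
    mul_nonneg (mul_nonneg (mul_nonneg (mul_nonneg h0.le h0.le) h0.le) h0.le) (sub_nonneg.2 hc),
    sq_nonneg (t*(2/9 - t))]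

lemma polyB (u : ℝ) (h0 : 0 ≤ u) (hc : u ≤ 5/18) :
    (1 - 9.8697*u^2/2)^2 * (1/2 + 2*u^2) ≥ 8 * (1/4 - u^2)^2 := by
  nlinarith [sq_nonneg u, sq_nonneg (u*u), mul_nonneg (mul_nonneg h0 h0) (sub_nonneg.2 hc),
    mul_nonneg (mul_nonneg (mul_nonneg h0 h0) h0) h0,
    mul_nonneg (mul_nonneg (mul_nonneg (mul_nonneg h0 h0) h0) h0) (sub_nonneg.2 hc),
    mul_nonneg (mul_nonneg (mul_nonneg (mul_nonneg (mul_nonneg h0 h0) h0) h0) h0) h0,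
    mul_nonneg (mul_nonneg (mul_nonneg h0 h0) (mul_nonneg h0 h0)) (sub_nonneg.2 hc),
    sq_nonneg (u*u*((5/18)^2 - u^2))]

set_option maxHeartbeats 1000000 in
lemma aux (t : ℝ) (h0 : 0 < t) (h1 : t ≤ 1/2) :
    Real.sin (Real.pi * t) ^ 2 * ((1-t)^2 + t^2) ≥ 8 * t^2 * (1-t)^2 := by
  have hπ := Real.pi_gt_d6
  have hπ' := Real.pi_lt_d6
  have hπ0 := Real.pi_pos
  have hp1 : (9.8696 : ℝ) < Real.pi ^ 2 := by nlinarith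
  have hp2 : Real.pi ^ 2 < 9.8697 := by nlinarith
  rcases le_or_gt t (2/9) with hc | hc
  · -- use sin x > x - x^3/4
    have hx0 : 0 < Real.pi * t := by positivity
    have hx1 : Real.pi * t ≤ 1 := by nlinarith
    have hs : Real.pi * t - (Real.pi * t) ^ 3 / 4 < Real.sin (Real.pi * t) := by
      have := Real.sin_gt_sub_cube hx0
      nlinarith [pow_pos hx0 3]
    have hcube : (Real.pi*t)^3 ≤ Real.pi*t := by
      nlinarith [mul_pos hx0 hx0]
    have hs0 : 0 < Real.pi * t - (Real.pi * t)^3/4 := by linarith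
    have hsq : Real.sin (Real.pi * t) ^ 2 ≥ (Real.pi * t - (Real.pi * t)^3/4)^2 := by
      nlinarith
    -- (πt - (πt)^3/4)^2 = π^2 t^2 (1 - π^2 t^2 /4)^2 ≥ 9.8696 t^2 (1 - 9.8697 t^2/4)^2
    have hfac : (Real.pi * t - (Real.pi * t)^3/4)^2
        ≥ 9.8696 * t^2 * (1 - 9.8697*t^2/4)^2 := by
      have e1 : Real.pi * t - (Real.pi * t)^3/4
          = Real.pi * t * (1 - Real.pi^2 * t^2/4) := by ring
      have h2 : (0:ℝ) < 1 - 9.8697*t^2/4 := by nlinarith [sq_nonneg t]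
      have h3 : 1 - 9.8697*t^2/4 ≤ 1 - Real.pi^2*t^2/4 := by nlinarith [sq_nonneg t]
      have h4 : Real.pi * t * (1 - Real.pi^2 * t^2/4) ≥ Real.pi * t * (1 - 9.8697*t^2/4) := by
        nlinarith [sq_nonneg t, mul_pos hx0 h2]
      have h5 : Real.pi * t * (1 - 9.8697*t^2/4) > 0 := mul_pos hx0 h2
      rw [e1]
      nlinarith [mul_pos hx0 h2, sq_nonneg t, mul_nonneg (mul_nonneg h0.le h0.le) (sq_nonneg (1 - 9.8697*t^2/4))]
    have hA := polyA t h0 hc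
    have hnn : (0:ℝ) ≤ (1-t)^2 + t^2 := by positivity
    have hs2 : Real.sin (Real.pi * t) ^ 2 ≥ 9.8696 * t^2 * (1 - 9.8697*t^2/4)^2 :=
      le_trans hfac hsq
    calc Real.sin (Real.pi * t) ^ 2 * ((1-t)^2 + t^2)
        ≥ (9.8696 * t^2 * (1 - 9.8697*t^2/4)^2) * ((1-t)^2 + t^2) :=
          mul_le_mul_of_nonneg_right hs2 hnn
      _ = t^2 * (9.8696 * (1 - 9.8697*t^2/4)^2 * ((1-t)^2 + t^2)) := by ring
      _ ≥ t^2 * (8 * (1-t)^2) := mul_le_mul_of_nonneg_left hA (sq_nonneg t)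
      _ = 8 * t^2 * (1-t)^2 := by ring
  · set u : ℝ := 1/2 - t with hu
    have hu0 : 0 ≤ u := by rw [hu]; linarith
    have hu1 : u ≤ 5/18 := by rw [hu]; linarith
    have hc' : Real.sin (Real.pi * t) = Real.cos (Real.pi * u) := by
      rw [hu, show Real.pi * (1/2 - t) = Real.pi/2 - Real.pi * t by ring,
        Real.cos_pi_div_two_sub]
    have hcb : Real.cos (Real.pi * u) ≥ 1 - (Real.pi * u)^2/2 :=
      Real.one_sub_sq_div_two_le_cos
    have h2 : (0:ℝ) < 1 - 9.8697*u^2/2 := by nlinarith [sq_nonneg u]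
    have h3 : 1 - 9.8697*u^2/2 ≤ 1 - (Real.pi*u)^2/2 := by nlinarith [sq_nonneg u]
    have hsq : Real.sin (Real.pi * t) ^ 2 ≥ (1 - 9.8697*u^2/2)^2 := by
      rw [hc']
      nlinarith [h2, h3, hcb]
    have hB := polyB u hu0 hu1
    have ht : t = 1/2 - u := by rw [hu]; ring
    have e2 : (1-t)^2 + t^2 = 1/2 + 2*u^2 := by rw [ht]; ring
    have e3 : (8:ℝ) * t^2 * (1-t)^2 = 8 * (1/4 - u^2)^2 := by rw [ht]; ring
    rw [e2, e3]
    calc Real.sin (Real.pi * t) ^ 2 * (1/2 + 2*u^2)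
        ≥ (1 - 9.8697*u^2/2)^2 * (1/2 + 2*u^2) :=
          mul_le_mul_of_nonneg_right hsq (by positivity)
      _ ≥ 8 * (1/4 - u^2)^2 := hB

/-- For `t ∈ (0,1)`, `sin²(πt)·(1/(πt)² + 1/(π(1-t))²) ≥ 8/π²`. -/
theorem sin_sq_fejer_bound (t : ℝ) (h0 : 0 < t) (h1 : t < 1) :
    Real.sin (Real.pi * t) ^ 2 *
        (1 / (Real.pi * t) ^ 2 + 1 / (Real.pi * (1 - t)) ^ 2)
      ≥ 8 / Real.pi ^ 2 := by
  have hπ0 := Real.pi_pos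
  have h1t : 0 < 1 - t := by linarith
  have key : Real.sin (Real.pi * t) ^ 2 * ((1-t)^2 + t^2) ≥ 8 * t^2 * (1-t)^2 := by
    rcases le_or_gt t (1/2) with hle | hlt
    · exact aux t h0 hle
    · have h := aux (1-t) h1t (by linarith)
      have hs : Real.sin (Real.pi * (1-t)) = Real.sin (Real.pi * t) := by
        rw [show Real.pi * (1-t) = Real.pi - Real.pi * t by ring, Real.sin_pi_sub]
      rw [hs] at h
      nlinarith [h]
  have hE : 1 / (Real.pi * t) ^ 2 + 1 / (Real.pi * (1 - t)) ^ 2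
      = ((1-t)^2 + t^2) / (Real.pi^2 * (t*(1-t))^2) := by
    field_simp
  have hD : (0:ℝ) < Real.pi^2 * (t*(1-t))^2 := by positivity
  rw [hE, ge_iff_le, show Real.sin (Real.pi * t) ^ 2 * (((1-t)^2 + t^2) / (Real.pi^2 * (t*(1-t))^2))
      = Real.sin (Real.pi * t) ^ 2 * ((1-t)^2 + t^2) / (Real.pi^2 * (t*(1-t))^2) by ring,
    div_le_div_iff₀ (by positivity) hD]
  nlinarith [key, sq_nonneg Real.pi]
end

section
/- Grover success probability formula in terms of sinc: if θ ∈ (0, π/2) with sin²θ = λ the fraction of marked items, and m ≥ 1 queries are chosen uniformly at random from {0,...,m-1} Grover iterations, then the average success probability equals (1/2)·(1 - sin(4mθ)/(2m·sin(2θ))), i.e., (1/m)∑_{j=0}^{m-1} sin²((2j+1)θ) = 1/2 - sin(4mθ)/(4m sin 2θ). -/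
lemma cos_sum_telescope (θ : ℝ) (m : ℕ) :
    2 * Real.sin (2 * θ) * ∑ j ∈ Finset.range m, Real.cos ((4 * j + 2) * θ)
      = Real.sin (4 * m * θ) := by
  induction m with
  | zero => simp
  | succ n ih =>
    rw [Finset.sum_range_succ, mul_add, ih]
    have h1 : (4 * (n + 1) : ℝ) * θ = (4 * n + 2) * θ + 2 * θ := by push_cast; ring
    have h2 : (4 * n : ℝ) * θ = (4 * n + 2) * θ - 2 * θ := by ring
    rw [h2] at *
    push_cast
    rw [h1, Real.sin_add, Real.sin_sub]
    ring

/-- Boyer–Brassard–Høyer–Tapp Lemma 2: the average success probability of a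
uniformly random number of Grover iterations,
`(1/m)·∑_{j=0}^{m-1} sin²((2j+1)θ) = 1/2 - sin(4mθ)/(4m·sin(2θ))`. -/
theorem bbht_average_success (θ : ℝ) (h0 : 0 < θ) (h1 : θ < Real.pi / 2)
    (hs : Real.sin (2 * θ) ≠ 0) (m : ℕ) (hm : 1 ≤ m) :
    (1 / m : ℝ) * ∑ j ∈ Finset.range m, Real.sin ((2 * j + 1) * θ) ^ 2
      = 1 / 2 - Real.sin (4 * m * θ) / (4 * m * Real.sin (2 * θ)) := by
  have hm' : (m : ℝ) ≠ 0 := by positivity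
  have key := cos_sum_telescope θ m
  have hsum : ∑ j ∈ Finset.range m, Real.sin ((2 * j + 1) * θ) ^ 2
      = m / 2 - (∑ j ∈ Finset.range m, Real.cos ((4 * j + 2) * θ)) / 2 := by
    have : ∀ j ∈ Finset.range m, Real.sin ((2 * j + 1) * θ) ^ 2
        = 1 / 2 - Real.cos ((4 * j + 2) * θ) / 2 := by
      intro j _
      have : ((4 * j + 2) : ℝ) * θ = 2 * ((2 * j + 1) * θ) := by ring
      rw [this, Real.cos_two_mul]
      nlinarith [Real.sin_sq_add_cos_sq ((2 * j + 1) * θ)]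
    rw [Finset.sum_congr rfl this, Finset.sum_sub_distrib, Finset.sum_const,
      Finset.card_range, ← Finset.sum_div]
    push_cast
    ring
  have hS : ∑ j ∈ Finset.range m, Real.cos ((4 * j + 2) * θ)
      = Real.sin (4 * m * θ) / (2 * Real.sin (2 * θ)) := by
    field_simp
    rw [show (4:ℝ) * θ * m = 4 * m * θ by ring]
    linear_combination key
  rw [hsum, hS]
  field_simp
  ring
end
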